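/- Let (X,R,μ) be a probability space over K, let T be an invertible measure preserving transformation of (X,R,μ), and let α be a finite partition of X relative to R. Then the limit h_μ(T,α) = lim_{n→∞} (1/n)·H_μ(α ∨ T⁻¹α ∨ ⋯ ∨ T^{-(n-1)}α) exists, and it equals inf_{n≥1} (1/n)·H_μ(α ∨ T⁻¹α ∨ ⋯ ∨ T^{-(n-1)}α). -/

import Mathlib

open scoped Classical

/-- A covering ring of subsets of `X`: it covers `X` and is closed under
intersections, unions and differences. -/
def IsCoveringRing {X : Type*} (R : Set (Set X)) : Prop :=
  (∀ x : X, ∃ A ∈ R, x ∈ A) ∧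
    ∀ A ∈ R, ∀ B ∈ R, A ∩ B ∈ R ∧ A ∪ B ∈ R ∧ A \ B ∈ R

/-- `R` is separating: distinct points can be separated by a member of `R`. -/
def Separating {X : Type*} (R : Set (Set X)) : Prop :=
  ∀ x y : X, x ≠ y → ∃ A ∈ R, x ∈ A ∧ y ∉ A

/-- A shrinking collection: the intersection of any two members contains a member. -/
def Shrinking {X : Type*} (𝒜 : Set (Set X)) : Prop :=
  ∀ A ∈ 𝒜, ∀ B ∈ 𝒜, ∃ C ∈ 𝒜, C ⊆ A ∩ B

/-- A `K`-valued measure on a covering ring `R`: additive, bounded and continuous. -/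
structure IsKMeasure {X : Type*} {K : Type*} [NormedField K]
    (R : Set (Set X)) (μ : Set X → K) : Prop where
  additive : ∀ A ∈ R, ∀ B ∈ R, Disjoint A B → μ (A ∪ B) = μ A + μ B
  bounded : ∀ A ∈ R, ∃ M : ℝ, ∀ B ∈ R, B ⊆ A → ‖μ B‖ ≤ M
  cont : ∀ 𝒜 ⊆ R, Shrinking 𝒜 → ⋂₀ 𝒜 = ∅ →
    ∀ ε : ℝ, 0 < ε → ∃ A₀ ∈ 𝒜, ∀ A ∈ 𝒜, A ⊆ A₀ → ‖μ A‖ < ε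

/-- `‖A‖_μ = sup {|μ B| : B ∈ R, B ⊆ A}`. -/
noncomputable def setNorm {X K : Type*} [NormedField K]
    (R : Set (Set X)) (μ : Set X → K) (A : Set X) : ℝ :=
  sSup {r : ℝ | ∃ B ∈ R, B ⊆ A ∧ r = ‖μ B‖}

/-- `N_μ(x) = inf {‖A‖_μ : A ∈ R, x ∈ A}`. -/
noncomputable def normFun {X K : Type*} [NormedField K]
    (R : Set (Set X)) (μ : Set X → K) (x : X) : ℝ :=
  sInf {r : ℝ | ∃ A ∈ R, x ∈ A ∧ r = setNorm R μ A}

/-- `‖f‖_μ = sup_{x ∈ X} |f x| ⬝ N_μ(x)`. -/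
noncomputable def fNorm {X K : Type*} [NormedField K]
    (R : Set (Set X)) (μ : Set X → K) (f : X → K) : ℝ :=
  sSup {r : ℝ | ∃ x : X, r = ‖f x‖ * normFun R μ x}

/-- A probability space: `R` is a covering algebra and `μ(X) = 1`. -/
def IsProbSpace {X K : Type*} [NormedField K] (R : Set (Set X)) (μ : Set X → K) : Prop :=
  IsCoveringRing R ∧ Set.univ ∈ R ∧ IsKMeasure R μ ∧ μ Set.univ = 1

/-- A measure algebra isomorphism `(R,μ) → (R',ν)`. -/
def IsMeasAlgIso {X Y K : Type*} [NormedField K] (R : Set (Set X)) (μ : Set X → K)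
    (R' : Set (Set Y)) (ν : Set Y → K) (Φ : Set X → Set Y) : Prop :=
  Set.BijOn Φ R R' ∧
    (∀ A ∈ R, ∀ B ∈ R, Φ (A ∪ B) = Φ A ∪ Φ B) ∧
    (∀ A ∈ R, Φ (Set.univ \ A) = Set.univ \ Φ A) ∧
    (∀ A ∈ R, ν (Φ A) = μ A)

/-- An invertible measure preserving transformation of `(X,R,μ)`. -/
def IsInvMPT {X K : Type*} [NormedField K] (R : Set (Set X)) (μ : Set X → K)
    (T : X → X) : Prop :=
  Function.Bijective T ∧
    (∀ A ∈ R, T '' A ∈ R) ∧ (∀ A ∈ R, T ⁻¹' A ∈ R) ∧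
    (∀ A ∈ R, μ (T '' A) = μ A) ∧ (∀ A ∈ R, μ (T ⁻¹' A) = μ A)

/-- A finite partition of `X` by pairwise disjoint nonempty members of `R`. -/
def IsFinPartition {X : Type*} (R : Set (Set X)) (α : Finset (Set X)) : Prop :=
  (∀ A ∈ α, A ∈ R) ∧ (∀ A ∈ α, A ≠ ∅) ∧
    (∀ A ∈ α, ∀ B ∈ α, A ≠ B → Disjoint A B) ∧
    ⋃₀ (α : Set (Set X)) = Set.univ

/-- The join `α ∨ β` of two partitions, discarding empty intersections. -/
noncomputable def pJoin {X : Type*} (α β : Finset (Set X)) : Finset (Set X) :=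
  (Finset.image₂ (fun A B => A ∩ B) α β).filter (fun C => C ≠ ∅)

/-- `M(α)`: the number of members of `α` of positive norm. -/
noncomputable def Mcard {X K : Type*} [NormedField K] (R : Set (Set X)) (μ : Set X → K)
    (α : Finset (Set X)) : ℕ :=
  (α.filter (fun A => 0 < setNorm R μ A)).card

/-- `H_μ(α) = (min {‖A‖_μ : A ∈ α, ‖A‖_μ > 0}) * log₂ M(α)` (and `0` if `M(α) = 0`,
since `sInf ∅ = 0` and `log₂ 0 = 0` in Mathlib). -/
noncomputable def Hent {X K : Type*} [NormedField K] (R : Set (Set X)) (μ : Set X → K)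
    (α : Finset (Set X)) : ℝ :=
  sInf {r : ℝ | ∃ A ∈ α, 0 < setNorm R μ A ∧ r = setNorm R μ A} *
    Real.logb 2 (Mcard R μ α)

/-- `joinSeq T α n = α ∨ T⁻¹α ∨ ⋯ ∨ T^{-n}α`. -/
noncomputable def joinSeq {X : Type*} (T : X → X) (α : Finset (Set X)) : ℕ → Finset (Set X)
  | 0 => α
  | n + 1 => pJoin (joinSeq T α n) (α.image (fun A => T^[n + 1] ⁻¹' A))

/-- `h_μ(T,α) = lim_{n→∞} H_μ(α ∨ T⁻¹α ∨ ⋯ ∨ T^{-(n-1)}α)/n`. -/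
noncomputable def hMeasPart {X K : Type*} [NormedField K] (R : Set (Set X)) (μ : Set X → K)
    (T : X → X) (α : Finset (Set X)) : ℝ :=
  Filter.limUnder Filter.atTop (fun n : ℕ => Hent R μ (joinSeq T α n) / (n + 1))

/-- `h_μ(T) = sup_α h_μ(T,α)` over finite partitions `α` of `X` relative to `R`. -/
noncomputable def hMeas {X K : Type*} [NormedField K] (R : Set (Set X)) (μ : Set X → K)
    (T : X → X) : ℝ :=
  sSup {r : ℝ | ∃ α : Finset (Set X), IsFinPartition R α ∧ r = hMeasPart R μ T α}

/-- The partition `α(𝒰)` associated to a finite cover `𝒰`: nonempty sets of the form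
`A₁ ∩ ⋯ ∩ A_k` where each `Aᵢ` is `Uᵢ` or `X ∖ Uᵢ`. -/
noncomputable def coverPart {X : Type*} (𝒰 : Finset (Set X)) : Finset (Set X) :=
  ((𝒰.powerset).image fun S => (⋂ U ∈ S, U) ∩ ⋂ U ∈ 𝒰 \ S, (Set.univ \ U)).filter
    (fun C => C ≠ ∅)

/-- The join `𝒰 ∨ 𝒲` of two covers. -/
noncomputable def cJoin {X : Type*} (𝒰 𝒲 : Finset (Set X)) : Finset (Set X) :=
  Finset.image₂ (fun U W => U ∩ W) 𝒰 𝒲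

/-- `N(𝒰)`: the least cardinality of a subcover of `𝒰`. -/
noncomputable def coverN {X : Type*} (𝒰 : Finset (Set X)) : ℕ :=
  sInf {n : ℕ | ∃ 𝒱 : Finset (Set X), 𝒱 ⊆ 𝒰 ∧ ⋃₀ (𝒱 : Set (Set X)) = Set.univ ∧ 𝒱.card = n}

/-- `H_top(𝒰) = log₂ N(𝒰)`. -/
noncomputable def Htop {X : Type*} (𝒰 : Finset (Set X)) : ℝ :=
  Real.logb 2 (coverN 𝒰)

/-- `cJoinSeq T 𝒰 n = 𝒰 ∨ T⁻¹𝒰 ∨ ⋯ ∨ T^{-n}𝒰`. -/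
noncomputable def cJoinSeq {X : Type*} (T : X → X) (𝒰 : Finset (Set X)) : ℕ → Finset (Set X)
  | 0 => 𝒰
  | n + 1 => cJoin (cJoinSeq T 𝒰 n) (𝒰.image (fun U => T^[n + 1] ⁻¹' U))

/-- `h_top(T,𝒰) = lim_{n→∞} H_top(𝒰 ∨ T⁻¹𝒰 ∨ ⋯ ∨ T^{-(n-1)}𝒰)/n`. -/
noncomputable def hTopCov {X : Type*} (T : X → X) (𝒰 : Finset (Set X)) : ℝ :=
  Filter.limUnder Filter.atTop (fun n : ℕ => Htop (cJoinSeq T 𝒰 n) / (n + 1))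

/-- `h_top(T) = sup_𝒰 h_top(T,𝒰)` over finite open covers `𝒰` of `X` for the
topology `t`. -/
noncomputable def hTop {X : Type*} (t : TopologicalSpace X) (T : X → X) : ℝ :=
  sSup {r : ℝ | ∃ 𝒰 : Finset (Set X), (∀ U ∈ 𝒰, t.IsOpen U) ∧
    ⋃₀ (𝒰 : Set (Set X)) = Set.univ ∧ r = hTopCov T 𝒰}

/-!
Over a nonarchimedean field, the norm `‖A‖_μ` is attained on one of the pieces `A ∩ B` cut out
by any partition `β`, because `μ C = ∑ B ∈ β, μ (C ∩ B)` and the norm of a sum is at most the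
largest norm of its terms. So the smallest positive norm of a piece of `α ∨ β` is at most that of
`α` and of `β`, while `M(α ∨ β) ≤ M(α) M(β)`; hence `H_μ(α ∨ β) ≤ H_μ(α) + H_μ(β)`. As `T`
preserves norms, `H_μ(T^{-k}β) = H_μ(β)`, so `n ↦ H_μ(α ∨ ⋯ ∨ T^{-(n-1)}α)` is subadditive and
nonnegative, and Fekete's lemma gives convergence to the infimum.
-/

open Filter Topology

section

variable {X K : Type*} [NormedField K] {R : Set (Set X)} {μ : Set X → K}

namespace IsCoveringRing

lemma inter_mem (hR : IsCoveringRing R) {A B : Set X} (hA : A ∈ R) (hB : B ∈ R) :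
    A ∩ B ∈ R :=
  (hR.2 A hA B hB).1

lemma diff_mem (hR : IsCoveringRing R) {A B : Set X} (hA : A ∈ R) (hB : B ∈ R) :
    A \ B ∈ R :=
  (hR.2 A hA B hB).2.2

end IsCoveringRing

namespace IsKMeasure

lemma map_empty (hμ : IsKMeasure R μ) (h : ∅ ∈ R) : μ ∅ = 0 := by
  have := hμ.additive ∅ h ∅ h (Set.disjoint_empty ∅)
  rwa [Set.union_empty, left_eq_add] at this

lemma eq_sum_inter (hR : IsCoveringRing R) (hμ : IsKMeasure R μ) {s : Finset (Set X)}
    (hsR : ∀ B ∈ s, B ∈ R) (hs : ∀ A ∈ s, ∀ B ∈ s, A ≠ B → Disjoint A B)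
    {C : Set X} (hC : C ∈ R) (hCs : C ⊆ ⋃₀ s) : μ C = ∑ B ∈ s, μ (C ∩ B) := by
  induction s using Finset.induction_on generalizing C with
  | empty =>
    rw [Finset.coe_empty, Set.sUnion_empty, Set.subset_empty_iff] at hCs
    subst hCs
    simp [hμ.map_empty hC]
  | @insert B₀ s hB₀s ih =>
    have hB₀ : B₀ ∈ R := hsR B₀ (s.mem_insert_self B₀)
    have hrest : C \ B₀ ⊆ ⋃₀ s := fun x ⟨hxC, hxB₀⟩ => by
      obtain ⟨D, hD, hxD⟩ := hCs hxC
      rcases Finset.mem_insert.mp hD with rfl | hDs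
      · exact absurd hxD hxB₀
      · exact ⟨D, hDs, hxD⟩
    have hpieces : ∀ B ∈ s, C \ B₀ ∩ B = C ∩ B := fun B hB => by
      have := hs B₀ (s.mem_insert_self B₀) B (Finset.mem_insert_of_mem hB)
        (ne_of_mem_of_not_mem hB hB₀s).symm
      rw [Set.sdiff_eq, Set.inter_right_comm, ← Set.sdiff_eq,
        (this.symm.mono_left Set.inter_subset_right).sdiff_eq_left]
    calc μ C = μ (C ∩ B₀) + μ (C \ B₀) := by
          conv_lhs => rw [← Set.inter_union_sdiff C B₀]
          exact hμ.additive _ (hR.inter_mem hC hB₀) _ (hR.diff_mem hC hB₀)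
            Set.disjoint_sdiff_inter.symm
      _ = μ (C ∩ B₀) + ∑ B ∈ s, μ (C ∩ B) := by
          rw [ih (fun B hB => hsR B (Finset.mem_insert_of_mem hB))
            (fun A hA B hB => hs A (Finset.mem_insert_of_mem hA) B (Finset.mem_insert_of_mem hB))
            (hR.diff_mem hC hB₀) hrest]
          exact congrArg _ (Finset.sum_congr rfl fun B hB => congrArg μ (hpieces B hB))
      _ = ∑ B ∈ insert B₀ s, μ (C ∩ B) := by rw [Finset.sum_insert hB₀s]

end IsKMeasure

lemma setNorm_nonneg (A : Set X) : 0 ≤ setNorm R μ A :=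
  Real.sSup_nonneg fun _ ⟨_, _, _, hr⟩ => hr ▸ norm_nonneg _

lemma norm_le_setNorm (hμ : IsKMeasure R μ) {A B : Set X} (hA : A ∈ R) (hB : B ∈ R)
    (hBA : B ⊆ A) : ‖μ B‖ ≤ setNorm R μ A := by
  obtain ⟨M, hM⟩ := hμ.bounded A hA
  exact le_csSup ⟨M, fun _ ⟨C, hC, hCA, hr⟩ => hr ▸ hM C hC hCA⟩ ⟨B, hB, hBA, rfl⟩

lemma setNorm_mono (hμ : IsKMeasure R μ) {A B : Set X} (hB : B ∈ R) (hAB : A ⊆ B) :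
    setNorm R μ A ≤ setNorm R μ B :=
  Real.sSup_le (fun _ ⟨_, hC, hCA, hr⟩ => hr ▸ norm_le_setNorm hμ hB hC (hCA.trans hAB))
    (setNorm_nonneg B)

lemma setNorm_empty (hμ : IsKMeasure R μ) : setNorm R μ (∅ : Set X) = 0 := by
  refine le_antisymm (Real.sSup_le ?_ le_rfl) (setNorm_nonneg ∅)
  rintro _ ⟨B, hB, hB₀, rfl⟩
  rw [Set.subset_empty_iff.mp hB₀] at hB ⊢
  rw [hμ.map_empty hB, norm_zero]

lemma ne_empty_of_setNorm_pos (hμ : IsKMeasure R μ) {A : Set X} (hA : 0 < setNorm R μ A) :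
    A ≠ ∅ := by
  rintro rfl
  exact hA.ne' (setNorm_empty hμ)

lemma IsFinPartition.exists_mem {α : Finset (Set X)} (hα : IsFinPartition R α) (x : X) :
    ∃ A ∈ α, x ∈ A := by
  have hx : x ∈ ⋃₀ (α : Set (Set X)) := hα.2.2.2 ▸ Set.mem_univ x
  simpa using hx

lemma exists_setNorm_le_setNorm_inter (hna : IsNonarchimedean (norm : K → ℝ))
    (hR : IsCoveringRing R) (hμ : IsKMeasure R μ) {A : Set X} (hA : A ∈ R)
    {β : Finset (Set X)} (hβ : IsFinPartition R β) (hne : β.Nonempty) :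
    ∃ B ∈ β, setNorm R μ A ≤ setNorm R μ (A ∩ B) := by
  obtain ⟨B₀, hB₀, hmax⟩ := β.exists_mem_eq_sup' hne fun B => setNorm R μ (A ∩ B)
  refine ⟨B₀, hB₀, hmax ▸ Real.sSup_le ?_ (hmax ▸ setNorm_nonneg _)⟩
  rintro _ ⟨C, hC, hCA, rfl⟩
  rw [hμ.eq_sum_inter hR hβ.1 hβ.2.2.1 hC (hβ.2.2.2 ▸ Set.subset_univ C)]
  refine (hna.apply_sum_le_sup hne).trans (Finset.sup'_le hne _ fun B hB => ?_)
  exact (norm_le_setNorm hμ (hR.inter_mem hA (hβ.1 B hB)) (hR.inter_mem hC (hβ.1 B hB))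
    (Set.inter_subset_inter_left B hCA)).trans (β.le_sup' (fun B => setNorm R μ (A ∩ B)) hB)

lemma mem_pJoin {a b : Finset (Set X)} {C : Set X} :
    C ∈ pJoin a b ↔ (∃ A ∈ a, ∃ B ∈ b, A ∩ B = C) ∧ C ≠ ∅ := by
  simp [pJoin]

lemma pJoin_comm (a b : Finset (Set X)) : pJoin a b = pJoin b a := by
  rw [pJoin, pJoin, Finset.image₂_comm Set.inter_comm]

lemma pJoin_assoc (a b c : Finset (Set X)) : pJoin (pJoin a b) c = pJoin a (pJoin b c) := by
  ext C
  simp only [mem_pJoin]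
  constructor
  · rintro ⟨⟨_, ⟨⟨A, hA, B, hB, rfl⟩, -⟩, D, hD, rfl⟩, hne⟩
    exact ⟨⟨A, hA, B ∩ D, ⟨⟨B, hB, D, hD, rfl⟩, fun h => hne (by rw [Set.inter_assoc, h,
      Set.inter_empty])⟩, (Set.inter_assoc _ _ _).symm⟩, hne⟩
  · rintro ⟨⟨A, hA, _, ⟨⟨B, hB, D, hD, rfl⟩, -⟩, rfl⟩, hne⟩
    exact ⟨⟨A ∩ B, ⟨⟨A, hA, B, hB, rfl⟩, fun h => hne (by rw [← Set.inter_assoc, h,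
      Set.empty_inter])⟩, D, hD, Set.inter_assoc _ _ _⟩, hne⟩

lemma image_preimage_pJoin {f : X → X} (hf : f.Surjective) (a b : Finset (Set X)) :
    (pJoin a b).image (f ⁻¹' ·) = pJoin (a.image (f ⁻¹' ·)) (b.image (f ⁻¹' ·)) := by
  have hempty : ∀ C : Set X, f ⁻¹' C ≠ ∅ ↔ C ≠ ∅ := fun C => by
    simp [← Set.nonempty_iff_ne_empty, hf.nonempty_preimage]
  rw [pJoin, pJoin, ← Finset.image_image₂_distrib fun _ _ => Set.preimage_inter,
    Finset.filter_image]
  simp only [hempty]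

lemma IsFinPartition.pJoin (hR : IsCoveringRing R) {a b : Finset (Set X)}
    (ha : IsFinPartition R a) (hb : IsFinPartition R b) : IsFinPartition R (pJoin a b) := by
  refine ⟨fun C hC => ?_, fun C hC => (mem_pJoin.mp hC).2, fun C hC C' hC' hne => ?_, ?_⟩
  · obtain ⟨⟨A, hA, B, hB, rfl⟩, -⟩ := mem_pJoin.mp hC
    exact hR.inter_mem (ha.1 A hA) (hb.1 B hB)
  · obtain ⟨⟨A, hA, B, hB, rfl⟩, -⟩ := mem_pJoin.mp hC
    obtain ⟨⟨A', hA', B', hB', rfl⟩, -⟩ := mem_pJoin.mp hC'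
    by_cases hAA' : A = A'
    · subst hAA'
      exact (hb.2.2.1 B hB B' hB' fun h => hne (h ▸ rfl)).mono
        Set.inter_subset_right Set.inter_subset_right
    · exact (ha.2.2.1 A hA A' hA' hAA').mono Set.inter_subset_left Set.inter_subset_left
  · refine Set.eq_univ_of_forall fun x => ?_
    obtain ⟨A, hA, hxA⟩ := ha.exists_mem x
    obtain ⟨B, hB, hxB⟩ := hb.exists_mem x
    exact ⟨A ∩ B, mem_pJoin.mpr ⟨⟨A, hA, B, hB, rfl⟩, Set.nonempty_iff_ne_empty.mp ⟨x, hxA, hxB⟩⟩,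
      hxA, hxB⟩

lemma IsFinPartition.image_preimage {f : X → X} (hf : f.Surjective)
    (hfR : ∀ A ∈ R, f ⁻¹' A ∈ R) {α : Finset (Set X)} (hα : IsFinPartition R α) :
    IsFinPartition R (α.image (f ⁻¹' ·)) := by
  simp only [IsFinPartition, Finset.forall_mem_image]
  refine ⟨fun A hA => hfR A (hα.1 A hA), fun A hA => ?_, fun A hA B hB hne => ?_, ?_⟩
  · exact (Set.nonempty_iff_ne_empty.mpr (hα.2.1 A hA)).preimage hf |>.ne_empty
  · exact (hα.2.2.1 A hA B hB fun h => hne (h ▸ rfl)).preimage f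
  · refine Set.eq_univ_of_forall fun x => ?_
    obtain ⟨A, hA, hxA⟩ := hα.exists_mem (f x)
    exact ⟨f ⁻¹' A, Finset.mem_image_of_mem _ hA, hxA⟩

noncomputable def minPosSetNorm (R : Set (Set X)) (μ : Set X → K) (α : Finset (Set X)) : ℝ :=
  sInf {r : ℝ | ∃ A ∈ α, 0 < setNorm R μ A ∧ r = setNorm R μ A}

lemma hent_eq (α : Finset (Set X)) :
    Hent R μ α = minPosSetNorm R μ α * Real.logb 2 (Mcard R μ α) :=
  rfl

lemma minPosSetNorm_nonneg (α : Finset (Set X)) : 0 ≤ minPosSetNorm R μ α :=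
  Real.sInf_nonneg fun _ ⟨_, _, hpos, hr⟩ => hr ▸ hpos.le

lemma minPosSetNorm_le {α : Finset (Set X)} {A : Set X} (hA : A ∈ α)
    (hpos : 0 < setNorm R μ A) : minPosSetNorm R μ α ≤ setNorm R μ A :=
  csInf_le ⟨0, fun _ ⟨_, _, hpos', hr⟩ => hr ▸ hpos'.le⟩ ⟨A, hA, hpos, rfl⟩

lemma exists_setNorm_eq_minPosSetNorm {α : Finset (Set X)} (hM : 0 < Mcard R μ α) :
    ∃ A ∈ α, 0 < setNorm R μ A ∧ minPosSetNorm R μ α = setNorm R μ A := by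
  obtain ⟨A, hA⟩ := Finset.card_pos.mp hM
  rw [Finset.mem_filter] at hA
  have hfin : {r : ℝ | ∃ A ∈ α, 0 < setNorm R μ A ∧ r = setNorm R μ A}.Finite :=
    (α.finite_toSet.image (setNorm R μ)).subset fun _ ⟨B, hB, _, hr⟩ => ⟨B, hB, hr.symm⟩
  exact Set.Nonempty.csInf_mem (s := {r : ℝ | ∃ A ∈ α, 0 < setNorm R μ A ∧ r = setNorm R μ A})
    ⟨_, A, hA.1, hA.2, rfl⟩ hfin

lemma mcard_pJoin_le (hμ : IsKMeasure R μ) {a b : Finset (Set X)} (haR : ∀ A ∈ a, A ∈ R)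
    (hbR : ∀ B ∈ b, B ∈ R) : Mcard R μ (pJoin a b) ≤ Mcard R μ a * Mcard R μ b := by
  refine (Finset.card_le_card fun C hC => ?_).trans (Finset.card_image₂_le (· ∩ ·) _ _)
  rw [Finset.mem_filter, mem_pJoin] at hC
  obtain ⟨⟨⟨A, hA, B, hB, rfl⟩, -⟩, hpos⟩ := hC
  exact Finset.mem_image₂_of_mem
    (Finset.mem_filter.mpr ⟨hA, hpos.trans_le (setNorm_mono hμ (haR A hA) Set.inter_subset_left)⟩)
    (Finset.mem_filter.mpr ⟨hB, hpos.trans_le (setNorm_mono hμ (hbR B hB) Set.inter_subset_right)⟩)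

lemma minPosSetNorm_pJoin_le_left (hna : IsNonarchimedean (norm : K → ℝ))
    (hR : IsCoveringRing R) (hμ : IsKMeasure R μ) {a b : Finset (Set X)}
    (ha : IsFinPartition R a) (hb : IsFinPartition R b) (hM : 0 < Mcard R μ a) :
    minPosSetNorm R μ (pJoin a b) ≤ minPosSetNorm R μ a := by
  obtain ⟨A, hA, hpos, hmin⟩ := exists_setNorm_eq_minPosSetNorm hM
  obtain ⟨x, -⟩ := Set.nonempty_iff_ne_empty.mpr (ha.2.1 A hA)
  obtain ⟨B', hB', -⟩ := hb.exists_mem x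
  obtain ⟨B, hB, hle⟩ := exists_setNorm_le_setNorm_inter hna hR hμ (ha.1 A hA) hb ⟨B', hB'⟩
  have hpos' : 0 < setNorm R μ (A ∩ B) := hpos.trans_le hle
  rw [hmin]
  exact (minPosSetNorm_le (mem_pJoin.mpr ⟨⟨A, hA, B, hB, rfl⟩, ne_empty_of_setNorm_pos hμ hpos'⟩)
    hpos').trans (setNorm_mono hμ (ha.1 A hA) Set.inter_subset_left)

lemma logb_two_natCast_nonneg (n : ℕ) : 0 ≤ Real.logb 2 n :=
  div_nonneg (Real.log_natCast_nonneg n) (Real.log_nonneg one_le_two)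

lemma hent_nonneg (α : Finset (Set X)) : 0 ≤ Hent R μ α :=
  mul_nonneg (minPosSetNorm_nonneg α) (logb_two_natCast_nonneg _)

lemma hent_pJoin_le (hna : IsNonarchimedean (norm : K → ℝ)) (hR : IsCoveringRing R)
    (hμ : IsKMeasure R μ) {a b : Finset (Set X)} (ha : IsFinPartition R a)
    (hb : IsFinPartition R b) : Hent R μ (pJoin a b) ≤ Hent R μ a + Hent R μ b := by
  have hM := mcard_pJoin_le hμ ha.1 hb.1
  rcases Nat.eq_zero_or_pos (Mcard R μ (pJoin a b)) with h0 | hpos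
  · rw [hent_eq, h0, Nat.cast_zero, Real.logb_zero, mul_zero]
    exact add_nonneg (hent_nonneg a) (hent_nonneg b)
  obtain ⟨hMa, hMb⟩ := CanonicallyOrderedAdd.mul_pos.mp (hpos.trans_le hM)
  have hleft := minPosSetNorm_pJoin_le_left hna hR hμ ha hb hMa
  have hright := pJoin_comm a b ▸ minPosSetNorm_pJoin_le_left hna hR hμ hb ha hMb
  have hlog : Real.logb 2 (Mcard R μ (pJoin a b)) ≤
      Real.logb 2 (Mcard R μ a) + Real.logb 2 (Mcard R μ b) := by
    rw [← Real.logb_mul (by positivity) (by positivity)]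
    exact Real.logb_le_logb_of_le one_lt_two (by positivity) (by exact_mod_cast hM)
  calc Hent R μ (pJoin a b)
        ≤ minPosSetNorm R μ (pJoin a b) * Real.logb 2 (Mcard R μ a) +
          minPosSetNorm R μ (pJoin a b) * Real.logb 2 (Mcard R μ b) := by
        rw [hent_eq, ← mul_add]
        exact mul_le_mul_of_nonneg_left hlog (minPosSetNorm_nonneg _)
    _ ≤ Hent R μ a + Hent R μ b :=
        add_le_add (mul_le_mul_of_nonneg_right hleft (logb_two_natCast_nonneg _))
          (mul_le_mul_of_nonneg_right hright (logb_two_natCast_nonneg _))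

namespace IsInvMPT

lemma comp {S T : X → X} (hS : IsInvMPT R μ S) (hT : IsInvMPT R μ T) :
    IsInvMPT R μ (S ∘ T) := by
  refine ⟨hS.1.comp hT.1, fun A hA => ?_, fun A hA => ?_, fun A hA => ?_, fun A hA => ?_⟩
  · rw [Set.image_comp]; exact hS.2.1 _ (hT.2.1 A hA)
  · rw [Set.preimage_comp]; exact hT.2.2.1 _ (hS.2.2.1 A hA)
  · rw [Set.image_comp, hS.2.2.2.1 _ (hT.2.1 A hA), hT.2.2.2.1 A hA]
  · rw [Set.preimage_comp, hT.2.2.2.2 _ (hS.2.2.1 A hA), hS.2.2.2.2 A hA]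

lemma id : IsInvMPT R μ (id : X → X) :=
  ⟨Function.bijective_id, fun A hA => by simpa, fun A hA => by simpa, fun A _ => by simp,
    fun A _ => by simp⟩

lemma iterate {T : X → X} (hT : IsInvMPT R μ T) (k : ℕ) : IsInvMPT R μ T^[k] := by
  induction k with
  | zero => exact IsInvMPT.id
  | succ k ih => rw [Function.iterate_succ]; exact ih.comp hT

lemma setNorm_preimage {S : X → X} (hS : IsInvMPT R μ S) (A : Set X) :
    setNorm R μ (S ⁻¹' A) = setNorm R μ A := by
  unfold setNorm
  congr 1
  ext r
  constructor
  · rintro ⟨B, hB, hBA, rfl⟩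
    exact ⟨S '' B, hS.2.1 B hB, Set.image_subset_iff.mpr hBA, by rw [hS.2.2.2.1 B hB]⟩
  · rintro ⟨B, hB, hBA, rfl⟩
    exact ⟨S ⁻¹' B, hS.2.2.1 B hB, Set.preimage_mono hBA, by rw [hS.2.2.2.2 B hB]⟩

lemma hent_image_preimage {S : X → X} (hS : IsInvMPT R μ S) (α : Finset (Set X)) :
    Hent R μ (α.image (S ⁻¹' ·)) = Hent R μ α := by
  have hinj : Function.Injective (S ⁻¹' · : Set X → Set X) :=
    Set.preimage_injective.mpr hS.1.2
  rw [hent_eq, hent_eq, Mcard, Mcard, Finset.filter_image, Finset.card_image_of_injective _ hinj]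
  simp only [minPosSetNorm, Finset.exists_mem_image, hS.setNorm_preimage]

end IsInvMPT

lemma joinSeq_add {T : X → X} (hT : T.Surjective) (α : Finset (Set X)) (m n : ℕ) :
    joinSeq T α (m + 1 + n) =
      pJoin (joinSeq T α m) ((joinSeq T α n).image (T^[m + 1] ⁻¹' ·)) := by
  induction n with
  | zero => rfl
  | succ n ih =>
    have hcomp : (α.image (T^[n + 1] ⁻¹' ·)).image (T^[m + 1] ⁻¹' ·) =
        α.image (T^[m + 1 + n + 1] ⁻¹' ·) := by
      rw [Finset.image_image]
      congr 1
      funext A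
      rw [Function.comp_apply, ← Set.preimage_comp, ← Function.iterate_add]
      congr 2
      omega
    rw [← Nat.add_assoc, joinSeq, ih, joinSeq, image_preimage_pJoin (hT.iterate _), pJoin_assoc,
      hcomp]

lemma IsFinPartition.joinSeq (hR : IsCoveringRing R) {T : X → X} (hT : IsInvMPT R μ T)
    {α : Finset (Set X)} (hα : IsFinPartition R α) (n : ℕ) :
    IsFinPartition R (joinSeq T α n) := by
  induction n with
  | zero => exact hα
  | succ n ih =>
    exact ih.pJoin hR (hα.image_preimage (hT.iterate _).1.2 (hT.iterate _).2.2.1)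

lemma hent_joinSeq_add_le (hna : IsNonarchimedean (norm : K → ℝ)) (hR : IsCoveringRing R)
    (hμ : IsKMeasure R μ) {T : X → X} (hT : IsInvMPT R μ T) {α : Finset (Set X)}
    (hα : IsFinPartition R α) (m n : ℕ) :
    Hent R μ (joinSeq T α (m + 1 + n)) ≤ Hent R μ (joinSeq T α m) + Hent R μ (joinSeq T α n) := by
  have hTm := hT.iterate (m + 1)
  rw [joinSeq_add hT.1.2, ← hTm.hent_image_preimage (joinSeq T α n)]
  exact hent_pJoin_le hna hR hμ (hα.joinSeq hR hT m)
    ((hα.joinSeq hR hT n).image_preimage hTm.1.2 hTm.2.2.1)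

end

/-- Fekete's lemma, applied to the subadditive sequence `n ↦ a (n - 1)`. -/
theorem tendsto_div_add_one_iInf_of_le_add {a : ℕ → ℝ} (h0 : ∀ n, 0 ≤ a n)
    (hsub : ∀ m n, a (m + 1 + n) ≤ a m + a n) :
    Tendsto (fun n : ℕ => a n / (n + 1)) atTop (𝓝 (⨅ n : ℕ, a n / (n + 1))) := by
  set u : ℕ → ℝ := fun n => a (n - 1)
  have hu : Subadditive u := by
    rintro (_ | m) (_ | n)
    iterate 3 simpa [u] using h0 0
    simpa [u, show m + 1 + (n + 1) - 1 = m + 1 + n by omega] using hsub m n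
  have hbdd : BddBelow (Set.range fun n : ℕ => u n / n) :=
    ⟨0, by rintro _ ⟨n, rfl⟩; exact div_nonneg (h0 _) n.cast_nonneg⟩
  have hshift : ∀ n : ℕ, a n / (n + 1) = u (n + 1) / ↑(n + 1) := fun n => by simp [u]
  have hlim : Tendsto (fun n : ℕ => a n / (n + 1)) atTop (𝓝 hu.lim) := by
    simp only [hshift]
    exact (tendsto_add_atTop_iff_nat 1).mpr (hu.tendsto_lim hbdd)
  have hinf : hu.lim = ⨅ n : ℕ, a n / (n + 1) :=
    le_antisymm (le_ciInf fun n => hshift n ▸ hu.lim_le_div hbdd n.succ_ne_zero)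
      (ge_of_tendsto' hlim fun n =>
        ciInf_le ⟨0, by rintro _ ⟨k, rfl⟩; exact div_nonneg (h0 k) k.cast_add_one_pos.le⟩ n)
  exact hinf ▸ hlim

/-- `joinSeq T α n` has `n + 1` joinands, so this is the sequence
`(1/n) H_μ(α ∨ ⋯ ∨ T^{-(n-1)}α)` reindexed from `n ≥ 1`. -/
theorem stmt15_general {X K : Type*} [NontriviallyNormedField K]
    (hna : IsNonarchimedean (norm : K → ℝ))
    (R : Set (Set X)) (μ : Set X → K) (hXp : IsProbSpace R μ)
    (T : X → X) (hT : IsInvMPT R μ T)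
    (α : Finset (Set X)) (hα : IsFinPartition R α) :
    Filter.Tendsto (fun n : ℕ => Hent R μ (joinSeq T α n) / (n + 1)) Filter.atTop
      (nhds (⨅ n : ℕ, Hent R μ (joinSeq T α n) / (n + 1))) :=
  tendsto_div_add_one_iInf_of_le_add (fun _ => hent_nonneg _)
    (hent_joinSeq_add_le hna hXp.1 hXp.2.2.1 hT hα)

/-- The limit `h_μ(T,α) = lim_n H_μ(α ∨ T⁻¹α ∨ ⋯ ∨ T^{-(n-1)}α)/n`
exists and equals the infimum of the sequence. Here `joinSeq T α n` has `n + 1` joinands,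
so the sequence `n ↦ H_μ(joinSeq T α n)/(n+1)` is exactly `n ↦ (1/n)·H_μ(α ∨ ⋯ ∨ T^{-(n-1)}α)`
re-indexed over `n ≥ 1`. -/
theorem stmt15 {X K : Type*} [NontriviallyNormedField K] [CompleteSpace K]
    (hna : IsNonarchimedean (norm : K → ℝ))
    (R : Set (Set X)) (μ : Set X → K) (hXp : IsProbSpace R μ)
    (T : X → X) (hT : IsInvMPT R μ T)
    (α : Finset (Set X)) (hα : IsFinPartition R α) :
    Filter.Tendsto (fun n : ℕ => Hent R μ (joinSeq T α n) / (n + 1)) Filter.atTop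
      (nhds (⨅ n : ℕ, Hent R μ (joinSeq T α n) / (n + 1))) :=
  stmt15_general hna R μ hXp T hT α hα
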